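/- Fix c₁, c₂ ∈ ℂ. Let g, v, G, V ∈ C∞₂π(ℝ²,ℂ) satisfy G_x = g_y, V_x = v_y and ∫₀^{2π} G(x,y) dx = ∫₀^{2π} V(x,y) dx = 0 for every y (so G = ∂_x^{−1}g_y and V = ∂_x^{−1}v_y). Then: (i) for all a, b, A ∈ C∞₂π(ℝ²,ℂ) with A_x = a_y and ∫₀^{2π} A dx = 0, one has d/dε|_{ε=0} ∫₀^{2π}∫₀^{2π} [ (v+εb)²/2 + (v+εb)·(G+εA) ] dx dy = ∫₀^{2π}∫₀^{2π} [ b·(v+G) + a·V ] dx dy, i.e. the variational gradient of the Hamiltonian H(g,v) = ∫∫ (v²/2 + v·∂_x^{−1}g_y) dx dy is (δH/δv, δH/δg) = (v+G, V); (ii) the coadjoint action of (v+G, V) on (g,v) is âd*_{(v+G,V)}(g,v) = ( v·g_x − v_x·g − g_y·g + g_x·G + c₂·v_y + c₂·G_y , 3·v_x·v + c₁·v_{xxx} + c₂·V_y + 2·v·g_y − v_y·g + v_x·G − 2·g_x·V + c₁·g_{xxy} ). Hence the Euler equation on ĝ* associated with H is the generalized Kadomtsev–Petviashvili system g_t = v·g_x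 − v_x·g − g_y·g + g_x·∂_x^{−1}g_y + c₂·v_y + c₂·∂_x^{−1}g_{yy}, v_t = 3·v_x·v + c₁·v_{xxx} + c₂·∂_x^{−1}v_{yy} + 2·v·g_y − v_y·g + v_x·∂_x^{−1}g_y − 2·g_x·∂_x^{−1}v_y + c₁·g_{xxy}. -/

import Mathlib

open Real intervalIntegral
open scoped ContDiff

noncomputable section

/-- Functions on `ℝ²` (representing functions on the 2-torus `S¹ × S¹`). -/
abbrev F2 : Type := ℝ × ℝ → ℂ

/-- `C∞₂π(ℝ²,ℂ)`: smooth functions `ℝ² → ℂ` which are `2π`-periodic in each variable. -/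
def SmoothPer2 (f : F2) : Prop :=
  ContDiff ℝ ∞ f ∧ (∀ p : ℝ × ℝ, f (p.1 + 2 * π, p.2) = f p)
    ∧ (∀ p : ℝ × ℝ, f (p.1, p.2 + 2 * π) = f p)

/-- Partial derivative in the first variable `x`. -/
def pdx (f : F2) : F2 := fun p => deriv (fun t => f (t, p.2)) p.1

/-- Partial derivative in the second variable `y`. -/
def pdy (f : F2) : F2 := fun p => deriv (fun t => f (p.1, t)) p.2

/-- Double integral `∫₀^{2π}∫₀^{2π} f dx dy` over the torus. -/
def integ2 (f : F2) : ℂ := ∫ y in (0:ℝ)..(2 * π), ∫ x in (0:ℝ)..(2 * π), f (x, y)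

/-- Membership in the looped cotangent Virasoro algebra `g̃`: a pair `(f,u)` of
functions in `C∞₂π(ℝ²,ℂ)`, `f` representing the loop of vector fields `f(x,y)·∂/∂x`
and `u` the loop of quadratic differentials `u(x,y)·dx²`. -/
def MemG (a : F2 × F2) : Prop := SmoothPer2 a.1 ∧ SmoothPer2 a.2

/-- The Lie bracket of the looped cotangent Virasoro algebra `g̃ = L(Vect(S¹) ⋉ F₂)`:
`[(f,u),(g,v)] = (f·g_x − f_x·g, f·v_x + 2·f_x·v − g·u_x − 2·g_x·u)`. -/
def gBracket (a b : F2 × F2) : F2 × F2 :=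
  (fun p => a.1 p * pdx b.1 p - pdx a.1 p * b.1 p,
   fun p => a.1 p * pdx b.2 p + 2 * pdx a.1 p * b.2 p
     - b.1 p * pdx a.2 p - 2 * pdx b.1 p * a.2 p)

/-- The coadjoint action of the centrally extended algebra `ĝ` with central charges
`(c₁,c₂)`: `âd*_{(f,u)}(g,v) = (f·g_x − f_x·g + c₂·f_y,
f·v_x + 2·f_x·v − u_x·g − 2·u·g_x + c₁·f_{xxx} + c₂·u_y)`. -/
def hatAd (c₁ c₂ : ℂ) (f u g v : F2) : F2 × F2 :=
  (fun p => f p * pdx g p - pdx f p * g p + c₂ * pdy f p,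
   fun p => f p * pdx v p + 2 * pdx f p * v p - pdx u p * g p - 2 * u p * pdx g p
     + c₁ * pdx (pdx (pdx f)) p + c₂ * pdy u p)

/-!
Part (ii) is a direct computation from `(v + G)_x = v_x + g_y` and `V_x = v_y`.

For (i) the Hamiltonian density is quadratic in `ε`, so the derivative at `0` is
`∫∫ [b(v + G) + vA]`, and what remains is the symmetry `∫∫ vA = ∫∫ aV` of `∂_x⁻¹∂_y`. Since
`V_x = v_y`, the form `v dx + V dy` is closed, so it has a potential `P` with `P_x = v`,
`P_y = V`. By Green's theorem on rectangles, the zero `x`-mean of `V` forces zero `y`-mean as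
well, so `P` is `2π`-periodic in `y`, while `P(2π, y) - P(0, y)` is a constant `M`. Integrating
by parts in `x` and then in `y` gives `∫∫ vA = M ∫ A(0, y) dy - ∫∫ P a_y = 0 + ∫∫ Va`.
-/

open MeasureTheory Set

section PartialDerivatives

variable {f g : ℝ × ℝ → ℂ}

theorem hasDerivAt_pdx (hf : Differentiable ℝ f) (p : ℝ × ℝ) :
    HasDerivAt (fun t => f (t, p.2)) (pdx f p) p.1 :=
  (hf.comp (differentiable_id.prodMk (differentiable_const _)) p.1).hasDerivAt

-- The `y`-versions are the `x`-versions for `f ∘ Prod.swap`: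
-- `pdy f p = pdx (f ∘ Prod.swap) p.swap` holds by `rfl`.
theorem hasDerivAt_pdy (hf : Differentiable ℝ f) (p : ℝ × ℝ) :
    HasDerivAt (fun t => f (p.1, t)) (pdy f p) p.2 :=
  hasDerivAt_pdx (f := f ∘ Prod.swap) (hf.comp (differentiable_snd.prodMk differentiable_fst))
    p.swap

theorem pdx_eq_fderiv (hf : Differentiable ℝ f) (p : ℝ × ℝ) :
    pdx f p = fderiv ℝ f p (1, 0) := by
  have hline : HasDerivAt (fun t : ℝ => (t, p.2)) ((1 : ℝ), (0 : ℝ)) p.1 :=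
    (hasDerivAt_id p.1).prodMk (hasDerivAt_const p.1 p.2)
  exact ((hf p).hasFDerivAt.comp_hasDerivAt p.1 hline).deriv

theorem ContDiff.pdx {m n : WithTop ℕ∞} (hf : ContDiff ℝ n f) (hmn : m + 1 ≤ n) :
    ContDiff ℝ m (pdx f) := by
  have hdiff : Differentiable ℝ f :=
    hf.differentiable (ne_bot_of_le_ne_bot (by simp) (le_trans le_add_self hmn))
  rw [show _root_.pdx f = fun p => fderiv ℝ f p (1, 0) from funext (pdx_eq_fderiv hdiff)]
  exact (hf.fderiv_right hmn).clm_apply contDiff_const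

theorem ContDiff.pdy {m n : WithTop ℕ∞} (hf : ContDiff ℝ n f) (hmn : m + 1 ≤ n) :
    ContDiff ℝ m (pdy f) :=
  ((hf.comp (contDiff_snd.prodMk contDiff_fst)).pdx hmn).comp
    (contDiff_snd.prodMk contDiff_fst)

theorem pdx_add (hf : Differentiable ℝ f) (hg : Differentiable ℝ g) :
    pdx (fun q => f q + g q) = fun q => pdx f q + pdx g q :=
  funext fun p => ((hasDerivAt_pdx hf p).add (hasDerivAt_pdx hg p)).deriv

theorem pdy_add (hf : Differentiable ℝ f) (hg : Differentiable ℝ g) :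
    pdy (fun q => f q + g q) = fun q => pdy f q + pdy g q :=
  funext fun p => ((hasDerivAt_pdy hf p).add (hasDerivAt_pdy hg p)).deriv

theorem integral_pdx (hf : ContDiff ℝ 1 f) (y a b : ℝ) :
    ∫ s in a..b, pdx f (s, y) = f (b, y) - f (a, y) :=
  integral_eq_sub_of_hasDerivAt (f := fun t => f (t, y)) (f' := fun s => pdx f (s, y))
    (fun s _ => hasDerivAt_pdx (hf.differentiable one_ne_zero) (s, y))
    (((hf.pdx (m := 0) (by simp)).continuous.comp
      (continuous_id.prodMk continuous_const)).intervalIntegrable _ _)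

theorem integral_pdy (hf : ContDiff ℝ 1 f) (x a b : ℝ) :
    ∫ t in a..b, pdy f (x, t) = f (x, b) - f (x, a) :=
  integral_pdx (f := f ∘ Prod.swap) (hf.comp (contDiff_snd.prodMk contDiff_fst)) x a b

end PartialDerivatives

theorem intervalIntegral_integral_swap {E : Type*} [NormedAddCommGroup E] [NormedSpace ℝ E]
    {f : ℝ × ℝ → E} (hf : Continuous f) (a b c d : ℝ) :
    ∫ x in a..b, ∫ y in c..d, f (x, y) = ∫ y in c..d, ∫ x in a..b, f (x, y) := by
  simp only [intervalIntegral_eq_integral_uIoc, MeasureTheory.integral_smul]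
  rw [integral_integral_swap, smul_comm]
  rw [Measure.prod_restrict, ← Measure.volume_eq_prod]
  exact (hf.continuousOn.integrableOn_compact (isCompact_uIcc.prod isCompact_uIcc)).mono_set
    (prod_mono uIoc_subset_uIcc uIoc_subset_uIcc)

section Integ2

variable {f g : ℝ × ℝ → ℂ}

theorem integ2_add (hf : Continuous f) (hg : Continuous g) :
    integ2 (fun p => f p + g p) = integ2 f + integ2 g := by
  unfold integ2
  rw [← intervalIntegral.integral_add (Continuous.intervalIntegrable (by fun_prop) _ _)
    (Continuous.intervalIntegrable (by fun_prop) _ _)]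
  exact integral_congr fun y _ => intervalIntegral.integral_add
    (Continuous.intervalIntegrable (by fun_prop) _ _)
    (Continuous.intervalIntegrable (by fun_prop) _ _)

theorem integ2_const_mul (c : ℂ) (f : ℝ × ℝ → ℂ) :
    integ2 (fun p => c * f p) = c * integ2 f := by
  simp only [integ2, intervalIntegral.integral_const_mul]

theorem integ2_eq_integral_integral_swap (hf : Continuous f) :
    integ2 f = ∫ x in (0:ℝ)..(2 * π), ∫ y in (0:ℝ)..(2 * π), f (x, y) :=
  (intervalIntegral_integral_swap hf _ _ _ _).symm

theorem hasDerivAt_integ2_quadratic {f₀ f₁ f₂ : ℝ × ℝ → ℂ} (h₀ : Continuous f₀)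
    (h₁ : Continuous f₁) (h₂ : Continuous f₂) :
    HasDerivAt (fun ε : ℝ => integ2 fun p => f₀ p + ε * f₁ p + ε ^ 2 * f₂ p) (integ2 f₁) 0 := by
  have hexpand : (fun ε : ℝ => integ2 fun p => f₀ p + ε * f₁ p + ε ^ 2 * f₂ p)
      = fun ε : ℝ => integ2 f₀ + ε * integ2 f₁ + ε ^ 2 * integ2 f₂ := by
    funext ε
    rw [integ2_add (by fun_prop) (by fun_prop), integ2_add h₀ (by fun_prop), integ2_const_mul,
      integ2_const_mul]
  rw [hexpand]
  have hε : HasDerivAt (fun ε : ℝ => (ε : ℂ)) 1 0 := (hasDerivAt_id (0 : ℝ)).ofReal_comp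
  exact (((hε.mul_const _).const_add _).add ((hε.pow 2).mul_const _)).congr_deriv (by simp)

end Integ2

section ClosedForms

variable {u U : ℝ × ℝ → ℂ}

theorem integral_rectangle_paths_eq (hu : ContDiff ℝ 1 u) (hU : ContDiff ℝ 1 U)
    (hUx : ∀ p, pdx U p = pdy u p) (x₁ x₂ y₁ y₂ : ℝ) :
    (∫ s in x₁..x₂, u (s, y₁)) + ∫ t in y₁..y₂, U (x₂, t)
      = (∫ t in y₁..y₂, U (x₁, t)) + ∫ s in x₁..x₂, u (s, y₂) := by
  have hcu := hu.continuous
  have hcU := hU.continuous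
  have hflux :
      ∫ s in x₁..x₂, (u (s, y₂) - u (s, y₁)) = ∫ t in y₁..y₂, (U (x₂, t) - U (x₁, t)) :=
    calc ∫ s in x₁..x₂, (u (s, y₂) - u (s, y₁))
        = ∫ s in x₁..x₂, ∫ t in y₁..y₂, pdx U (s, t) :=
          integral_congr fun s _ => by simp only [hUx, integral_pdy hu]
      _ = ∫ t in y₁..y₂, ∫ s in x₁..x₂, pdx U (s, t) :=
          intervalIntegral_integral_swap (hU.pdx (m := 0) (by simp)).continuous _ _ _ _
      _ = ∫ t in y₁..y₂, (U (x₂, t) - U (x₁, t)) :=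
          integral_congr fun t _ => integral_pdx hU t x₁ x₂
  rw [intervalIntegral.integral_sub (Continuous.intervalIntegrable (by fun_prop) _ _)
      (Continuous.intervalIntegrable (by fun_prop) _ _),
    intervalIntegral.integral_sub (Continuous.intervalIntegrable (by fun_prop) _ _)
      (Continuous.intervalIntegrable (by fun_prop) _ _)] at hflux
  linear_combination -hflux

theorem integral_slice_snd_eq_zero (hu : ContDiff ℝ 1 u) (hU : ContDiff ℝ 1 U)
    (hUx : ∀ p, pdx U p = pdy u p) (hu_per : ∀ p : ℝ × ℝ, u (p.1, p.2 + 2 * π) = u p)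
    (hU0 : ∀ y : ℝ, ∫ x in (0:ℝ)..(2 * π), U (x, y) = 0) (x : ℝ) :
    ∫ y in (0:ℝ)..(2 * π), U (x, y) = 0 := by
  have hconst : ∀ x, ∫ y in (0:ℝ)..(2 * π), U (x, y) = ∫ y in (0:ℝ)..(2 * π), U (0, y) := by
    intro x
    have hpaths := integral_rectangle_paths_eq hu hU hUx 0 x 0 (2 * π)
    have hu_top : ∀ s, u (s, 2 * π) = u (s, 0) := fun s => by simpa using hu_per (s, 0)
    simp only [hu_top] at hpaths
    linear_combination hpaths
  have hmean : (2 * π : ℂ) * ∫ y in (0:ℝ)..(2 * π), U (0, y) = 0 :=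
    calc (2 * π : ℂ) * ∫ y in (0:ℝ)..(2 * π), U (0, y)
        = ∫ x in (0:ℝ)..(2 * π), ∫ y in (0:ℝ)..(2 * π), U (x, y) := by simp [hconst]
      _ = 0 := by simp [intervalIntegral_integral_swap hU.continuous, hU0]
  rw [hconst x]
  exact (mul_eq_zero.mp hmean).resolve_left (by simp [pi_ne_zero])

end ClosedForms

/-- The potential of the closed form `v dx + V dy`, integrated along `(0,0) → (x,0) → (x,y)`. -/
def potential (v V : ℝ × ℝ → ℂ) : ℝ × ℝ → ℂ :=
  fun p => (∫ s in (0:ℝ)..p.1, v (s, 0)) + ∫ t in (0:ℝ)..p.2, V (p.1, t)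

section Potential

variable {v V : ℝ × ℝ → ℂ}

theorem continuous_potential (hv : Continuous v) (hV : Continuous V) :
    Continuous (potential v V) := by
  unfold potential
  fun_prop

theorem potential_eq (hv : ContDiff ℝ 1 v) (hV : ContDiff ℝ 1 V) (hVx : ∀ p, pdx V p = pdy v p)
    (p : ℝ × ℝ) :
    potential v V p = (∫ t in (0:ℝ)..p.2, V (0, t)) + ∫ s in (0:ℝ)..p.1, v (s, p.2) :=
  integral_rectangle_paths_eq hv hV hVx 0 p.1 0 p.2

theorem hasDerivAt_potential_fst (hv : ContDiff ℝ 1 v) (hV : ContDiff ℝ 1 V)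
    (hVx : ∀ p, pdx V p = pdy v p) (x y : ℝ) :
    HasDerivAt (fun s => potential v V (s, y)) (v (x, y)) x := by
  have hslice : Continuous fun s => v (s, y) :=
    hv.continuous.comp (continuous_id.prodMk continuous_const)
  simp only [potential_eq hv hV hVx]
  exact (hslice.integral_hasStrictDerivAt 0 x).hasDerivAt.const_add _

theorem hasDerivAt_potential_snd (hV : Continuous V) (x y : ℝ) :
    HasDerivAt (fun t => potential v V (x, t)) (V (x, y)) y := by
  have hslice : Continuous fun t => V (x, t) := hV.comp (continuous_const.prodMk continuous_id)
  simp only [potential]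
  exact (hslice.integral_hasStrictDerivAt 0 y).hasDerivAt.const_add _

theorem potential_two_pi_fst (hV_per : ∀ p : ℝ × ℝ, V (p.1 + 2 * π, p.2) = V p) (y : ℝ) :
    potential v V (2 * π, y) = potential v V (0, y) + ∫ s in (0:ℝ)..(2 * π), v (s, 0) := by
  have hV_right : ∀ t, V (2 * π, t) = V (0, t) := fun t => by simpa using hV_per (0, t)
  simp only [potential, hV_right, intervalIntegral.integral_same]
  ring

theorem potential_two_pi_snd (hV0 : ∀ x : ℝ, ∫ y in (0:ℝ)..(2 * π), V (x, y) = 0) (x : ℝ) :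
    potential v V (x, 2 * π) = potential v V (x, 0) := by
  simp [potential, hV0]

end Potential

theorem integ2_mul_symm_of_pdx_eq_pdy {v V a A : ℝ × ℝ → ℂ}
    (hv : SmoothPer2 v) (hV : SmoothPer2 V) (hVx : ∀ p, pdx V p = pdy v p)
    (hV0 : ∀ y : ℝ, ∫ x in (0:ℝ)..(2 * π), V (x, y) = 0)
    (ha : SmoothPer2 a) (hA : SmoothPer2 A) (hAx : ∀ p, pdx A p = pdy a p)
    (hA0 : ∀ y : ℝ, ∫ x in (0:ℝ)..(2 * π), A (x, y) = 0) :
    integ2 (fun p => v p * A p) = integ2 (fun p => a p * V p) := by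
  have hv1 : ContDiff ℝ 1 v := hv.1.of_le (by norm_num)
  have hV1 : ContDiff ℝ 1 V := hV.1.of_le (by norm_num)
  have ha1 : ContDiff ℝ 1 a := ha.1.of_le (by norm_num)
  have hA1 : ContDiff ℝ 1 A := hA.1.of_le (by norm_num)
  set P := potential v V
  have hP : Continuous P := continuous_potential hv1.continuous hV1.continuous
  obtain ⟨ay, hay, ha_deriv, hA_deriv⟩ : ∃ ay : ℝ × ℝ → ℂ, Continuous ay ∧
      (∀ x y, HasDerivAt (fun t => a (x, t)) (ay (x, y)) y) ∧
      (∀ x y, HasDerivAt (fun s => A (s, y)) (ay (x, y)) x) :=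
    ⟨pdy a, (ha.1.pdy (m := 0) (by simp)).continuous,
      fun x y => hasDerivAt_pdy (ha1.differentiable one_ne_zero) (x, y),
      fun x y => hAx (x, y) ▸ hasDerivAt_pdx (hA1.differentiable one_ne_zero) (x, y)⟩
  have hV_slice := integral_slice_snd_eq_zero hv1 hV1 hVx hv.2.2 hV0
  have hA_slice := integral_slice_snd_eq_zero ha1 hA1 hAx ha.2.2 hA0
  have hx_parts : integ2 (fun p => v p * A p + P p * ay p) = 0 := by
    have hslice : ∀ y, ∫ x in (0:ℝ)..(2 * π), (v (x, y) * A (x, y) + P (x, y) * ay (x, y))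
        = (∫ s in (0:ℝ)..(2 * π), v (s, 0)) * A (0, y) := by
      intro y
      rw [integral_deriv_mul_eq_sub (fun x _ => hasDerivAt_potential_fst hv1 hV1 hVx x y)
        (fun x _ => hA_deriv x y)
        (Continuous.intervalIntegrable (by fun_prop) _ _)
        (Continuous.intervalIntegrable (by fun_prop) _ _),
        potential_two_pi_fst hV.2.1, show A (2 * π, y) = A (0, y) by simpa using hA.2.1 (0, y)]
      ring
    simp only [integ2, hslice, intervalIntegral.integral_const_mul, hA_slice, mul_zero]
  have hy_parts : integ2 (fun p => V p * a p + P p * ay p) = 0 := by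
    have hslice : ∀ x, ∫ y in (0:ℝ)..(2 * π), (V (x, y) * a (x, y) + P (x, y) * ay (x, y))
        = 0 := by
      intro x
      rw [integral_deriv_mul_eq_sub (fun y _ => hasDerivAt_potential_snd hV1.continuous x y)
        (fun y _ => ha_deriv x y)
        (Continuous.intervalIntegrable (by fun_prop) _ _)
        (Continuous.intervalIntegrable (by fun_prop) _ _),
        potential_two_pi_snd hV_slice, show a (x, 2 * π) = a (x, 0) by simpa using ha.2.2 (x, 0),
        sub_self]
    rw [integ2_eq_integral_integral_swap (by fun_prop)]
    simp [hslice]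
  have hPay : Continuous fun p => P p * ay p := by fun_prop
  have hvA := integ2_add (f := fun p => v p * A p) (by fun_prop) hPay
  have hVa := integ2_add (f := fun p => V p * a p) (by fun_prop) hPay
  rw [hx_parts] at hvA
  rw [hy_parts] at hVa
  calc integ2 (fun p => v p * A p) = integ2 (fun p => V p * a p) := by
        linear_combination hVa - hvA
    _ = integ2 (fun p => a p * V p) := by simp only [mul_comm]

theorem hasDerivAt_integ2_KP_hamiltonian {v G V a b A : ℝ × ℝ → ℂ}
    (hv : SmoothPer2 v) (hG : Continuous G) (hV : SmoothPer2 V) (hVx : ∀ p, pdx V p = pdy v p)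
    (hV0 : ∀ y : ℝ, ∫ x in (0:ℝ)..(2 * π), V (x, y) = 0)
    (ha : SmoothPer2 a) (hb : Continuous b) (hA : SmoothPer2 A) (hAx : ∀ p, pdx A p = pdy a p)
    (hA0 : ∀ y : ℝ, ∫ x in (0:ℝ)..(2 * π), A (x, y) = 0) :
    HasDerivAt (fun ε : ℝ => integ2 fun p =>
        (v p + ε * b p) ^ 2 / 2 + (v p + ε * b p) * (G p + ε * A p))
      (integ2 fun p => b p * (v p + G p) + a p * V p) 0 := by
  have hv' := hv.1.continuous
  have hV' := hV.1.continuous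
  have ha' := ha.1.continuous
  have hA' := hA.1.continuous
  have hexpand : (fun ε : ℝ => integ2 fun p =>
        (v p + ε * b p) ^ 2 / 2 + (v p + ε * b p) * (G p + ε * A p))
      = fun ε : ℝ => integ2 fun p => (v p ^ 2 / 2 + v p * G p)
        + ε * (b p * (v p + G p) + v p * A p) + ε ^ 2 * (b p ^ 2 / 2 + b p * A p) := by
    funext ε
    congr 1
    funext p
    ring
  rw [hexpand, integ2_add (by fun_prop) (by fun_prop),
    ← integ2_mul_symm_of_pdx_eq_pdy hv hV hVx hV0 ha hA hAx hA0,
    ← integ2_add (by fun_prop) (by fun_prop)]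
  exact hasDerivAt_integ2_quadratic (by fun_prop) (by fun_prop) (by fun_prop)

theorem generalized_KP_euler_equation_general (c₁ c₂ : ℂ) (g v G V : F2)
    (hg : SmoothPer2 g) (hv : SmoothPer2 v) (hG : SmoothPer2 G) (hV : SmoothPer2 V)
    (hGx : ∀ p, pdx G p = pdy g p) (hVx : ∀ p, pdx V p = pdy v p)
    (hV0 : ∀ y : ℝ, (∫ x in (0:ℝ)..(2 * π), V (x, y)) = 0) :
    (∀ a b A : F2, SmoothPer2 a → SmoothPer2 b → SmoothPer2 A →
      (∀ p, pdx A p = pdy a p) → (∀ y : ℝ, (∫ x in (0:ℝ)..(2 * π), A (x, y)) = 0) →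
      deriv (fun ε : ℝ => integ2 (fun p =>
          (v p + (ε : ℂ) * b p) ^ 2 / 2 + (v p + (ε : ℂ) * b p) * (G p + (ε : ℂ) * A p))) 0
        = integ2 (fun p => b p * (v p + G p) + a p * V p)) ∧
    hatAd c₁ c₂ (fun p => v p + G p) V g v
      = (fun p => v p * pdx g p - pdx v p * g p - pdy g p * g p + pdx g p * G p
            + c₂ * pdy v p + c₂ * pdy G p,
         fun p => 3 * pdx v p * v p + c₁ * pdx (pdx (pdx v)) p + c₂ * pdy V p
            + 2 * v p * pdy g p - pdy v p * g p + pdx v p * G p - 2 * pdx g p * V p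
            + c₁ * pdx (pdx (pdy g)) p) := by
  refine ⟨fun a b A ha hb hA hAx hA0 => ?_, ?_⟩
  · exact (hasDerivAt_integ2_KP_hamiltonian hv hG.1.continuous hV hVx hV0 ha hb.1.continuous
      hA hAx hA0).deriv
  · have hsmooth : ∀ {f : F2}, ContDiff ℝ ∞ f → ContDiff ℝ ∞ (pdx f) ∧ ContDiff ℝ ∞ (pdy f) :=
      fun hf => ⟨hf.pdx (by norm_num), hf.pdy (by norm_num)⟩
    have hdiff : ∀ {f : F2}, ContDiff ℝ ∞ f → Differentiable ℝ f :=
      fun hf => hf.differentiable (by simp)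
    have hvx := (hsmooth hv.1).1
    have hgy := (hsmooth hg.1).2
    simp only [hatAd, pdx_add (hdiff hv.1) (hdiff hG.1), pdy_add (hdiff hv.1) (hdiff hG.1),
      show pdx G = pdy g from funext hGx, show pdx V = pdy v from funext hVx,
      pdx_add (hdiff hvx) (hdiff hgy),
      pdx_add (hdiff (hsmooth hvx).1) (hdiff (hsmooth hgy).1)]
    ext p <;> ring

/-- **The generalized Kadomtsev–Petviashvili system as an Euler equation on `ĝ*`.**
Let `G = ∂_x^{−1}g_y` and `V = ∂_x^{−1}v_y` (i.e. `G_x = g_y`, `V_x = v_y` and `G`, `V`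
have zero mean in `x`). Then:
(i) the variational gradient of `H(g,v) = ∫∫ (v²/2 + v·∂_x^{−1}g_y) dx dy` is
`(δH/δv, δH/δg) = (v + G, V)`, in the sense that for any variation `(a,b)` with
`A = ∂_x^{−1}a_y`, `d/dε|₀ ∫∫ [(v+εb)²/2 + (v+εb)(G+εA)] = ∫∫ [b(v+G) + aV]`;
(ii) `âd*_{(v+G,V)}(g,v)` is exactly the right-hand side of the generalized KP system
`g_t = v·g_x − v_x·g − g_y·g + g_x·∂_x^{−1}g_y + c₂·v_y + c₂·∂_x^{−1}g_{yy}`,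
`v_t = 3·v_x·v + c₁·v_{xxx} + c₂·∂_x^{−1}v_{yy} + 2·v·g_y − v_y·g + v_x·∂_x^{−1}g_y
− 2·g_x·∂_x^{−1}v_y + c₁·g_{xxy}`. -/
theorem generalized_KP_euler_equation (c₁ c₂ : ℂ) (g v G V : F2)
    (hg : SmoothPer2 g) (hv : SmoothPer2 v) (hG : SmoothPer2 G) (hV : SmoothPer2 V)
    (hGx : ∀ p, pdx G p = pdy g p) (hVx : ∀ p, pdx V p = pdy v p)
    (hG0 : ∀ y : ℝ, (∫ x in (0:ℝ)..(2 * π), G (x, y)) = 0)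
    (hV0 : ∀ y : ℝ, (∫ x in (0:ℝ)..(2 * π), V (x, y)) = 0) :
    (∀ a b A : F2, SmoothPer2 a → SmoothPer2 b → SmoothPer2 A →
      (∀ p, pdx A p = pdy a p) → (∀ y : ℝ, (∫ x in (0:ℝ)..(2 * π), A (x, y)) = 0) →
      deriv (fun ε : ℝ => integ2 (fun p =>
          (v p + (ε : ℂ) * b p) ^ 2 / 2 + (v p + (ε : ℂ) * b p) * (G p + (ε : ℂ) * A p))) 0
        = integ2 (fun p => b p * (v p + G p) + a p * V p)) ∧
    hatAd c₁ c₂ (fun p => v p + G p) V g v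
      = (fun p => v p * pdx g p - pdx v p * g p - pdy g p * g p + pdx g p * G p
            + c₂ * pdy v p + c₂ * pdy G p,
         fun p => 3 * pdx v p * v p + c₁ * pdx (pdx (pdx v)) p + c₂ * pdy V p
            + 2 * v p * pdy g p - pdy v p * g p + pdx v p * G p - 2 * pdx g p * V p
            + c₁ * pdx (pdx (pdy g)) p) :=
  generalized_KP_euler_equation_general c₁ c₂ g v G V hg hv hG hV hGx hVx hV0
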